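/- There exists a constant C, depending only on r̄, ā, d̲, d̄, with the following property. Fix any dataset (r_j, a_j) ∈ ℝ × ℝ^m, j = 1,…,n, with |r_j| ≤ r̄ and ‖a_j‖_∞ ≤ ā for all j, let d ∈ ℝ^m satisfy 0 < d̲ ≤ d_i ≤ d̄ for all i, and assume the data are in general position: for every p ∈ ℝ^m there are at most m indices j with r_j = a_jᵀp. Let σ be a uniformly random permutation of {1,…,n} and run the Simple Online Algorithm with step size γ_t = 1/√n on the permuted data: p_1 = 0 ∈ ℝ^m and, for t = 1,…,n, x_t = 1 if r_{σ(t)} > a_{σ(t)}ᵀp_t and x_t = 0 otherwise, and p_{t+1} = (p_t + (1/√n)(a_{σ(t)} x_t − d)) ∨ 0, where ∨ denotes the componentwise maximum. Let R_n* be the optimal value of the LP: maximize Σ_{j=1}^n r_j x_j over x ∈ [0,1]^n subject to Σ_{j=1}^n a_{ij} x_j ≤ n d_i for i = 1,…,m, and let R_n(σ) = Σ_{t=1}^n r_{σ(t)} x_t. Then for all positive integers m and n: R_n* − E[R_n(σ)] ≤ C·(m + log n)·√n, where the expectation is the average over all n! permutations. -/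

import Mathlib

/-- The dual-price iterates of the Simple Online Algorithm. -/
noncomputable def pIter (m : ℕ) (r : ℕ → ℝ) (a : ℕ → Fin m → ℝ) (d : Fin m → ℝ)
    (γ : ℕ → ℝ) : ℕ → Fin m → ℝ
  | 0 => 0
  | t + 1 => fun i =>
      max (pIter m r a d γ t i
        + γ t * (a t i * (if (∑ k, a t k * pIter m r a d γ t k) < r t then 1 else 0) - d i)) 0

/-- The primal decisions of the Simple Online Algorithm. -/
noncomputable def xIter (m : ℕ) (r : ℕ → ℝ) (a : ℕ → Fin m → ℝ) (d : Fin m → ℝ)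
    (γ : ℕ → ℝ) (t : ℕ) : ℝ :=
  if (∑ k, a t k * pIter m r a d γ t k) < r t then 1 else 0

/-- Optimal value of the LP `max Σ_j r_j x_j  s.t.  Σ_j a_{ij} x_j ≤ b_i, x ∈ [0,1]ⁿ`. -/
noncomputable def LPval (n m : ℕ) (r : Fin n → ℝ) (a : Fin n → Fin m → ℝ)
    (b : Fin m → ℝ) : ℝ :=
  sSup ((fun x : Fin n → ℝ => ∑ j, r j * x j) ''
    {x | (∀ j, 0 ≤ x j ∧ x j ≤ 1) ∧ ∀ i, ∑ j, a j i * x j ≤ b i})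

/-- The reward data presented in the order given by the permutation `σ` (ℕ-indexed,
with junk value `0` beyond position `n`). -/
noncomputable def permR (n : ℕ) (σ : Equiv.Perm (Fin n)) (r : Fin n → ℝ) : ℕ → ℝ :=
  fun t => if h : t < n then r (σ ⟨t, h⟩) else 0

/-- The column data presented in the order given by the permutation `σ` (ℕ-indexed,
with junk value `0` beyond position `n`). -/
noncomputable def permA (m n : ℕ) (σ : Equiv.Perm (Fin n)) (a : Fin n → Fin m → ℝ) :
    ℕ → Fin m → ℝ :=
  fun t => if h : t < n then a (σ ⟨t, h⟩) else 0


open Equiv Finset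


lemma sum_perm_mulRight {n : ℕ} (π : Perm (Fin n)) (F : Perm (Fin n) → ℝ) :
    ∑ σ : Perm (Fin n), F (σ * π) = ∑ σ : Perm (Fin n), F σ :=
  Equiv.sum_comp (Equiv.mulRight π) F

lemma sum_perm_apply {n : ℕ} (t0 : Fin n) (g : Fin n → ℝ) :
    ∑ σ : Perm (Fin n), g (σ t0) = (n - 1).factorial * ∑ j, g j := by
  cases n with
  | zero => exact t0.elim0
  | succ n' =>
    have h1 : ∑ σ : Perm (Fin (n' + 1)), g (σ t0) = ∑ σ : Perm (Fin (n' + 1)), g (σ 0) := by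
      have := sum_perm_mulRight (n := n' + 1) (swap 0 t0) (fun σ => g (σ 0))
      simp only [Perm.mul_apply] at this
      rw [← this]
      simp [swap_apply_left]
    rw [h1, ← Equiv.sum_comp (Equiv.Perm.decomposeFin).symm (fun σ => g (σ 0))]
    rw [Fintype.sum_prod_type]
    simp only [Equiv.Perm.decomposeFin_symm_apply_zero, Finset.sum_const, Finset.card_univ,
      Fintype.card_perm, Fintype.card_fin, nsmul_eq_mul]
    rw [Nat.add_sub_cancel, Finset.mul_sum]

lemma sum_perm_apply_pair {n : ℕ} (t1 t2 : Fin n) (hne : t1 ≠ t2) (g h : Fin n → ℝ) :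
    ∑ σ : Perm (Fin n), g (σ t1) * h (σ t2)
      = (n - 2).factorial * ∑ j, g j * ((∑ l, h l) - h j) := by
  obtain ⟨n'', rfl⟩ : ∃ n'', n = n'' + 2 := by
    refine ⟨n - 2, ?_⟩
    by_contra hc
    have hn2 : n < 2 := by omega
    interval_cases n
    · exact t1.elim0
    · exact hne (Subsingleton.elim t1 t2)
  -- reduce to positions 0 and 1
  have step1 : ∑ σ : Perm (Fin (n'' + 2)), g (σ t1) * h (σ t2)
      = ∑ σ : Perm (Fin (n'' + 2)), g (σ 0) * h (σ 1) := by
    set t2' : Fin (n'' + 2) := swap 0 t1 t2 with ht2'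
    have ht2'0 : t2' ≠ 0 := by
      intro hh
      rw [ht2', swap_apply_eq_iff, swap_apply_left] at hh
      exact hne hh.symm
    have e1 : ∑ σ : Perm (Fin (n'' + 2)), g (σ t1) * h (σ t2)
        = ∑ σ : Perm (Fin (n'' + 2)), g (σ 0) * h (σ t2') := by
      have := sum_perm_mulRight (swap 0 t1) (fun σ => g (σ 0) * h (σ t2'))
      simp only [Perm.mul_apply] at this
      rw [← this]
      refine Finset.sum_congr rfl fun σ _ => ?_
      rw [swap_apply_left, ht2', swap_apply_self]
    have e2 : ∑ σ : Perm (Fin (n'' + 2)), g (σ 0) * h (σ t2')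
        = ∑ σ : Perm (Fin (n'' + 2)), g (σ 0) * h (σ 1) := by
      have h01 : (0 : Fin (n'' + 2)) ≠ 1 := by simp [Fin.ext_iff]
      have := sum_perm_mulRight (swap 1 t2') (fun σ => g (σ 0) * h (σ t2'))
      simp only [Perm.mul_apply] at this
      rw [← this]
      refine Finset.sum_congr rfl fun σ _ => ?_
      rw [swap_apply_of_ne_of_ne h01 (Ne.symm ht2'0), swap_apply_right]
    rw [e1, e2]
  rw [step1]
  rw [← Equiv.sum_comp (Equiv.Perm.decomposeFin).symm (fun σ => g (σ 0) * h (σ 1))]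
  rw [Fintype.sum_prod_type]
  have key : ∀ (j : Fin (n'' + 2)) (τ : Perm (Fin (n'' + 1))),
      (Equiv.Perm.decomposeFin.symm (j, τ)) 1 = swap 0 j ((τ 0).succ) := by
    intro j τ
    have h1 : (1 : Fin (n'' + 2)) = (0 : Fin (n'' + 1)).succ := rfl
    rw [h1, Equiv.Perm.decomposeFin_symm_apply_succ]
  simp only [Equiv.Perm.decomposeFin_symm_apply_zero, key]
  have inner : ∀ j : Fin (n'' + 2),
      ∑ τ : Perm (Fin (n'' + 1)), g j * h (swap 0 j ((τ 0).succ))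
        = n''.factorial * (g j * ((∑ l, h l) - h j)) := by
    intro j
    rw [← Finset.mul_sum, sum_perm_apply (0 : Fin (n'' + 1)) (fun i => h (swap 0 j i.succ))]
    have himg : ∑ i : Fin (n'' + 1), h ((swap 0 j) i.succ) = (∑ l, h l) - h j := by
      have hsp := Fin.sum_univ_succ (fun l : Fin (n'' + 2) => h (swap 0 j l))
      have hall : ∑ l : Fin (n'' + 2), h (swap 0 j l) = ∑ l, h l := Equiv.sum_comp (swap 0 j) h
      rw [hall, swap_apply_left] at hsp
      linarith [hsp]
    rw [himg, Nat.add_sub_cancel]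
    ring
  rw [Finset.sum_congr rfl (fun j _ => inner j), ← Finset.mul_sum]
  norm_num


lemma pIter_congr (m : ℕ) (r r' : ℕ → ℝ) (a a' : ℕ → Fin m → ℝ) (d : Fin m → ℝ)
    (γ : ℕ → ℝ) (t : ℕ) (h : ∀ s < t, r s = r' s ∧ a s = a' s) :
    pIter m r a d γ t = pIter m r' a' d γ t := by
  induction t with
  | zero => rfl
  | succ t ih =>
    have ht : pIter m r a d γ t = pIter m r' a' d γ t :=
      ih (fun s hs => h s (Nat.lt_succ_of_lt hs))
    have hr := (h t (Nat.lt_succ_self t)).1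
    have ha := (h t (Nat.lt_succ_self t)).2
    funext i
    simp only [pIter, ht, hr, ha]

lemma pIter_nonneg (m : ℕ) (r : ℕ → ℝ) (a : ℕ → Fin m → ℝ) (d : Fin m → ℝ)
    (γ : ℕ → ℝ) (t : ℕ) (i : Fin m) : 0 ≤ pIter m r a d γ t i := by
  cases t with
  | zero => simp [pIter]
  | succ t => exact le_max_right _ _

lemma mul_le_max_zero {c z : ℝ} (h0 : 0 ≤ c) (h1 : c ≤ 1) : c * z ≤ max z 0 := by
  rcases le_or_gt z 0 with hz | hz
  · exact le_trans (mul_nonpos_of_nonneg_of_nonpos h0 hz) (le_max_right _ _)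
  · exact le_trans (by nlinarith : c * z ≤ z) (le_max_left _ _)

lemma sum_inv_sqrt (n : ℕ) : ∑ k ∈ range n, 1 / Real.sqrt (k + 1) ≤ 2 * Real.sqrt n := by
  induction n with
  | zero => simp
  | succ n ih =>
    rw [Finset.sum_range_succ]
    have key : 1 / Real.sqrt (n + 1) ≤ 2 * Real.sqrt (n + 1) - 2 * Real.sqrt n := by
      have ha : Real.sqrt n * Real.sqrt n = n := Real.mul_self_sqrt (by positivity)
      have hb : Real.sqrt (n + 1) * Real.sqrt (n + 1) = (n : ℝ) + 1 := by
        rw [Real.mul_self_sqrt (by positivity)]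
      have hab : Real.sqrt n ≤ Real.sqrt (n + 1) := Real.sqrt_le_sqrt (by linarith)
      have hbpos : 0 < Real.sqrt (n + 1) := Real.sqrt_pos.mpr (by positivity)
      rw [div_le_iff₀ hbpos]
      nlinarith [Real.sqrt_nonneg n]
    push_cast
    linarith

lemma reward_id (m : ℕ) (R : ℕ → ℝ) (A : ℕ → Fin m → ℝ) (d : Fin m → ℝ) (γ : ℕ → ℝ) (t : ℕ) :
    R t * xIter m R A d γ t
      = (max (R t - ∑ k, A t k * pIter m R A d γ t k) 0 + ∑ i, d i * pIter m R A d γ t i)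
        + ∑ i, pIter m R A d γ t i * (A t i * xIter m R A d γ t - d i) := by
  classical
  set p := pIter m R A d γ t with hp
  set dot := ∑ k, A t k * p k with hdot
  have expand : ∑ i, p i * (A t i * xIter m R A d γ t - d i)
      = (∑ i, A t i * p i) * xIter m R A d γ t - ∑ i, d i * p i := by
    rw [Finset.sum_mul, ← Finset.sum_sub_distrib]
    exact Finset.sum_congr rfl fun i _ => by ring
  rw [expand]
  unfold xIter
  rcases lt_or_ge dot (R t) with h | h
  · rw [if_pos h, max_eq_left (by linarith)]
    ring
  · rw [if_neg (not_lt.mpr h), max_eq_right (by linarith)]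
    ring

lemma drift (m n : ℕ) (R : ℕ → ℝ) (A : ℕ → Fin m → ℝ) (d : Fin m → ℝ) (γc : ℝ)
    (hγ : 0 < γc) (G2 : ℝ)
    (hG : ∀ t < n, ∑ i, (A t i * xIter m R A d (fun _ => γc) t - d i) ^ 2 ≤ G2) :
    -(γc / 2) * n * G2
      ≤ ∑ t ∈ range n, ∑ i,
          pIter m R A d (fun _ => γc) t i * (A t i * xIter m R A d (fun _ => γc) t - d i) := by
  classical
  set γ : ℕ → ℝ := fun _ => γc with hγdef
  set P := pIter m R A d γ with hP
  set X := xIter m R A d γ with hX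
  set q : ℕ → ℝ := fun t => ∑ i, (P t i) ^ 2 with hq
  have step : ∀ t, q (t + 1) ≤ q t + 2 * γc * (∑ i, P t i * (A t i * X t - d i))
      + γc ^ 2 * ∑ i, (A t i * X t - d i) ^ 2 := by
    intro t
    have hcoord : ∀ i, (P (t + 1) i) ^ 2 ≤ (P t i + γc * (A t i * X t - d i)) ^ 2 := by
      intro i
      have : P (t + 1) i = max (P t i + γc * (A t i * X t - d i)) 0 := by
        simp only [hP, hX, pIter, xIter, hγdef]
      rw [this]
      rcases le_or_gt 0 (P t i + γc * (A t i * X t - d i)) with h | h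
      · rw [max_eq_left h]
      · rw [max_eq_right (le_of_lt h)]; nlinarith
    calc q (t + 1) ≤ ∑ i, (P t i + γc * (A t i * X t - d i)) ^ 2 :=
          Finset.sum_le_sum fun i _ => hcoord i
      _ = q t + 2 * γc * (∑ i, P t i * (A t i * X t - d i))
          + γc ^ 2 * ∑ i, (A t i * X t - d i) ^ 2 := by
          simp only [hq, Finset.mul_sum]
          rw [← Finset.sum_add_distrib, ← Finset.sum_add_distrib]
          exact Finset.sum_congr rfl fun i _ => by ring
  have tele : ∀ N, q N ≤ q 0 + ∑ t ∈ range N, (2 * γc * (∑ i, P t i * (A t i * X t - d i))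
      + γc ^ 2 * ∑ i, (A t i * X t - d i) ^ 2) := by
    intro N
    induction N with
    | zero => simp
    | succ N ih =>
      rw [Finset.sum_range_succ]
      have := step N
      linarith
  have hq0 : q 0 = 0 := by
    simp only [hq, hP]
    simp [pIter]
  have hqn : 0 ≤ q n := Finset.sum_nonneg fun i _ => sq_nonneg _
  have hteln := tele n
  rw [hq0] at hteln
  rw [Finset.sum_add_distrib, ← Finset.mul_sum, ← Finset.mul_sum] at hteln
  have hV2 : ∑ t ∈ range n, ∑ i, (A t i * X t - d i) ^ 2 ≤ n * G2 := by
    calc ∑ t ∈ range n, ∑ i, (A t i * X t - d i) ^ 2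
        ≤ ∑ t ∈ range n, G2 := Finset.sum_le_sum fun t ht => hG t (Finset.mem_range.mp ht)
      _ = n * G2 := by rw [Finset.sum_const, Finset.card_range, nsmul_eq_mul]
  have hγ2 : 0 ≤ γc ^ 2 := sq_nonneg _
  nlinarith [hteln, hV2, mul_le_mul_of_nonneg_left hV2 hγ2]

lemma dual_lb (m : ℕ) (S : Finset ℕ) (k : ℕ) (hk : S.card = k) (hk1 : 1 ≤ k)
    (rr : ℕ → ℝ) (aa : ℕ → Fin m → ℝ) (y : ℕ → ℝ) (p d : Fin m → ℝ)
    (rbar dlb : ℝ) (hrbar : 0 ≤ rbar) (hdlb : 0 < dlb)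
    (hr : ∀ j ∈ S, |rr j| ≤ rbar) (hy : ∀ j, 0 ≤ y j ∧ y j ≤ 1)
    (hp : ∀ i, 0 ≤ p i) (hd : ∀ i, dlb ≤ d i) :
    ∑ j ∈ S, rr j * y j
        - (rbar / dlb) * ∑ i, max ((∑ j ∈ S, aa j i * y j) - k * d i) 0
      ≤ ∑ j ∈ S, (max (rr j - ∑ i, aa j i * p i) 0 + ∑ i, d i * p i) := by
  classical
  set V : Fin m → ℝ := fun i => ∑ j ∈ S, aa j i * y j with hV
  have hdi : ∀ i, 0 < d i := fun i => lt_of_lt_of_le hdlb (hd i)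
  have hkR : (1 : ℝ) ≤ (k : ℝ) := by exact_mod_cast hk1
  have hkd : ∀ i, 0 < (k : ℝ) * d i := fun i => mul_pos (by linarith) (hdi i)
  set Sv : ℝ := ∑ i, max (V i - k * d i) 0 / (k * d i) with hSv
  have hSv0 : 0 ≤ Sv :=
    Finset.sum_nonneg fun i _ => div_nonneg (le_max_right _ _) (hkd i).le
  set θ : ℝ := max (1 - Sv) 0 with hθ
  have hθ0 : 0 ≤ θ := le_max_right _ _
  have hθ1 : θ ≤ 1 := max_le (by linarith) (by linarith)
  have hθV : ∀ i, θ * V i ≤ k * d i := by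
    intro i
    rcases le_or_gt (V i) ((k : ℝ) * d i) with hVi | hVi
    · rcases le_or_gt (V i) 0 with h0 | h0
      · exact le_trans (mul_nonpos_of_nonneg_of_nonpos hθ0 h0) (hkd i).le
      · nlinarith
    · rcases le_or_gt (1 - Sv) 0 with hs | hs
      · rw [hθ, max_eq_right hs, zero_mul]; exact (hkd i).le
      · have hθe : θ = 1 - Sv := max_eq_left hs.le
        have hterm : (V i - k * d i) / (k * d i) ≤ Sv := by
          refine le_trans ?_ (Finset.single_le_sum
            (f := fun i => max (V i - k * d i) 0 / (k * d i))
            (fun i _ => div_nonneg (le_max_right _ _) (hkd i).le) (Finset.mem_univ i))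
          exact div_le_div_of_nonneg_right (le_max_left _ _) (hkd i).le
        have h1 : V i - k * d i ≤ Sv * (k * d i) := by
          rw [div_le_iff₀ (hkd i)] at hterm; linarith
        rw [hθe]
        have hVpos : 0 < V i := lt_trans (hkd i) hVi
        have h2 : ((1 - Sv) * V i) * (k * d i) ≤ (k * d i) * (k * d i) := by
          nlinarith [mul_le_mul_of_nonneg_right h1 hVpos.le, sq_nonneg (V i - k * d i)]
        exact le_of_mul_le_mul_right h2 (hkd i)
  have key1 : ∀ j ∈ S, (θ * y j) * (rr j - ∑ i, aa j i * p i)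
      ≤ max (rr j - ∑ i, aa j i * p i) 0 := by
    intro j _
    exact mul_le_max_zero (mul_nonneg hθ0 (hy j).1)
      (mul_le_one₀ hθ1 (hy j).1 (hy j).2)
  have hsum1 : ∑ j ∈ S, (θ * y j) * (rr j - ∑ i, aa j i * p i)
      = θ * (∑ j ∈ S, rr j * y j) - ∑ i, (θ * V i) * p i := by
    calc ∑ j ∈ S, (θ * y j) * (rr j - ∑ i, aa j i * p i)
        = ∑ j ∈ S, (θ * (rr j * y j) - ∑ i, θ * (aa j i * y j) * p i) := by
          refine Finset.sum_congr rfl fun j _ => ?_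
          rw [mul_sub]
          congr 1
          · ring
          · rw [Finset.mul_sum]
            exact Finset.sum_congr rfl fun i _ => by ring
      _ = θ * (∑ j ∈ S, rr j * y j) - ∑ j ∈ S, ∑ i, θ * (aa j i * y j) * p i := by
          rw [Finset.sum_sub_distrib, Finset.mul_sum]
      _ = θ * (∑ j ∈ S, rr j * y j) - ∑ i, (θ * V i) * p i := by
          congr 1
          rw [Finset.sum_comm]
          refine Finset.sum_congr rfl fun i _ => ?_
          simp only [hV]
          rw [Finset.mul_sum, Finset.sum_mul]
  have main1 : θ * (∑ j ∈ S, rr j * y j)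
      ≤ ∑ j ∈ S, (max (rr j - ∑ i, aa j i * p i) 0 + ∑ i, d i * p i) := by
    have hsum2 : ∑ j ∈ S, (θ * y j) * (rr j - ∑ i, aa j i * p i)
        ≤ ∑ j ∈ S, max (rr j - ∑ i, aa j i * p i) 0 := Finset.sum_le_sum key1
    have hSconst : ∑ j ∈ S, ∑ i, d i * p i = (k : ℝ) * ∑ i, d i * p i := by
      rw [Finset.sum_const, hk, nsmul_eq_mul]
    have hcomp : ∑ i, (θ * V i) * p i ≤ (k : ℝ) * ∑ i, d i * p i := by
      rw [Finset.mul_sum]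
      refine Finset.sum_le_sum fun i _ => ?_
      calc (θ * V i) * p i ≤ ((k : ℝ) * d i) * p i :=
            mul_le_mul_of_nonneg_right (hθV i) (hp i)
        _ = (k : ℝ) * (d i * p i) := by ring
    rw [Finset.sum_add_distrib, hSconst]
    linarith [hsum2, hcomp, hsum1]
  have hA : ∑ j ∈ S, rr j * y j ≤ (k : ℝ) * rbar := by
    calc ∑ j ∈ S, rr j * y j ≤ ∑ j ∈ S, rbar := by
          refine Finset.sum_le_sum fun j hj => ?_
          have h1 := hy j
          have h2 := hr j hj
          calc rr j * y j ≤ |rr j| * y j :=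
                mul_le_mul_of_nonneg_right (le_abs_self _) h1.1
            _ ≤ rbar * 1 := mul_le_mul h2 h1.2 h1.1 hrbar
            _ = rbar := mul_one _
      _ = (k : ℝ) * rbar := by rw [Finset.sum_const, hk, nsmul_eq_mul]
  have h1θ : 1 - θ ≤ Sv := by
    rw [hθ]
    rcases le_total (1 - Sv) 0 with h | h
    · rw [max_eq_right h]; linarith
    · rw [max_eq_left h]; linarith
  have hSvk : Sv * (k : ℝ) = ∑ i, max (V i - k * d i) 0 / d i := by
    rw [hSv, Finset.sum_mul]
    refine Finset.sum_congr rfl fun i _ => ?_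
    have hkne : (k : ℝ) ≠ 0 := by linarith
    have hdne : d i ≠ 0 := (hdi i).ne'
    field_simp
  have hSvd : ∑ i, max (V i - k * d i) 0 / d i
      ≤ (1 / dlb) * ∑ i, max (V i - k * d i) 0 := by
    rw [Finset.mul_sum]
    refine Finset.sum_le_sum fun i _ => ?_
    rw [one_div, inv_mul_eq_div]
    have h0 := le_max_right (V i - (k:ℝ) * d i) (0:ℝ)
    gcongr
    exact hd i
  have main2 : ∑ j ∈ S, rr j * y j
      - (rbar / dlb) * ∑ i, max (V i - k * d i) 0 ≤ θ * ∑ j ∈ S, rr j * y j := by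
    have e1 : (1 - θ) * (∑ j ∈ S, rr j * y j) ≤ (1 - θ) * ((k : ℝ) * rbar) :=
      mul_le_mul_of_nonneg_left hA (by linarith)
    have e2 : (1 - θ) * ((k : ℝ) * rbar) ≤ Sv * ((k : ℝ) * rbar) :=
      mul_le_mul_of_nonneg_right h1θ (by positivity)
    have e3 : Sv * ((k : ℝ) * rbar) = rbar * (Sv * (k : ℝ)) := by ring
    have e4 : rbar * (Sv * (k : ℝ)) ≤ rbar * ((1 / dlb) * ∑ i, max (V i - k * d i) 0) := by
      rw [hSvk]
      exact mul_le_mul_of_nonneg_left hSvd hrbar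
    have e5 : rbar * ((1 / dlb) * ∑ i, max (V i - k * d i) 0)
        = (rbar / dlb) * ∑ i, max (V i - k * d i) 0 := by ring
    nlinarith [e1, e2, e4]
  calc ∑ j ∈ S, rr j * y j - (rbar / dlb) * ∑ i, max ((∑ j ∈ S, aa j i * y j) - k * d i) 0
      ≤ θ * ∑ j ∈ S, rr j * y j := main2
    _ ≤ _ := main1


set_option maxHeartbeats 2000000 in
/-- (Theorem 2, regret bound, random permutation model.) There is a
constant `C` depending only on `r̄, ā, d̲, d̄` such that for every dataset in general
position, the Simple Online Algorithm run with step size `1/√n` on a uniformly randomly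
permuted presentation of the data satisfies `R_n* − E[R_n(σ)] ≤ C (m + log n) √n`. -/
theorem stmt12 (rbar abar dlb dbar : ℝ) (hdlb : 0 < dlb) :
    ∃ C : ℝ, ∀ (m n : ℕ), 0 < m → 0 < n →
      ∀ (r : Fin n → ℝ) (a : Fin n → Fin m → ℝ) (d : Fin m → ℝ),
        (∀ j, |r j| ≤ rbar) → (∀ j i, |a j i| ≤ abar) →
        (∀ i, dlb ≤ d i ∧ d i ≤ dbar) →
        (∀ p : Fin m → ℝ, {j | r j = ∑ i, a j i * p i}.ncard ≤ m) →
        LPval n m r a (fun i => (n : ℝ) * d i)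
            - (∑ σ : Equiv.Perm (Fin n), ∑ t ∈ Finset.range n,
                permR n σ r t *
                  xIter m (permR n σ r) (permA m n σ a) d (fun _ => 1 / Real.sqrt n) t) /
              (Nat.factorial n : ℝ)
          ≤ C * ((m : ℝ) + Real.log n) * Real.sqrt n := by
  classical
  refine ⟨4 * |rbar| * |abar| / dlb + (|abar| + |dbar|) ^ 2 / 2 + 1, ?_⟩
  intro m n hm hn r a d hr ha hd _hgp
  set C : ℝ := 4 * |rbar| * |abar| / dlb + (|abar| + |dbar|) ^ 2 / 2 + 1 with hCdef
  have hrbar : 0 ≤ rbar := le_trans (abs_nonneg _) (hr ⟨0, hn⟩)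
  have habar : 0 ≤ abar := le_trans (abs_nonneg _) (ha ⟨0, hn⟩ ⟨0, hm⟩)
  have hdbar : 0 < dbar := lt_of_lt_of_le (lt_of_lt_of_le hdlb (hd ⟨0, hm⟩).1) (hd ⟨0, hm⟩).2
  have hnR : (0 : ℝ) < (n : ℝ) := by exact_mod_cast hn
  have hsq : 0 < Real.sqrt n := Real.sqrt_pos.mpr hnR
  set γc : ℝ := 1 / Real.sqrt (n : ℝ) with hγc
  have hγpos : 0 < γc := by positivity
  have hγn : γc * (n : ℝ) = Real.sqrt n := by
    rw [hγc, div_mul_eq_mul_div, one_mul]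
    exact Real.div_sqrt
  set K : ℝ := 4 * rbar * abar / dlb + (abar + dbar) ^ 2 / 2 with hKdef
  have hKC : K = C - 1 := by
    rw [hKdef, hCdef, abs_of_nonneg hrbar, abs_of_nonneg habar, abs_of_nonneg hdbar.le]
    ring
  have hfactR : (0 : ℝ) < (n.factorial : ℝ) := by
    exact_mod_cast Nat.factorial_pos n
  have hlog : 0 ≤ Real.log n := Real.log_nonneg (by exact_mod_cast hn)
  clear_value C K γc
  -- it suffices to prove the bound up to ε
  rw [sub_le_iff_le_add]
  rw [← sub_le_iff_le_add']
  apply le_of_forall_pos_le_add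
  intro ε hε
  rw [sub_le_iff_le_add']
  -- obtain a near-optimal feasible solution
  have hne : ((fun x : Fin n → ℝ => ∑ j, r j * x j) ''
      {x | (∀ j, 0 ≤ x j ∧ x j ≤ 1) ∧ ∀ i, ∑ j, a j i * x j ≤ (n : ℝ) * d i}).Nonempty := by
    refine ⟨0, ⟨fun _ => 0, ⟨fun j => ⟨le_refl 0, zero_le_one⟩, fun i => ?_⟩, by simp⟩⟩
    simp only [mul_zero, Finset.sum_const_zero]
    exact mul_nonneg hnR.le (le_trans hdlb.le (hd i).1)
  have hlt : LPval n m r a (fun i => (n : ℝ) * d i) - ε < LPval n m r a (fun i => (n : ℝ) * d i) := by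
    linarith
  obtain ⟨v, ⟨xstar, ⟨hx01, hxfeas⟩, hvval⟩, hvgt⟩ := exists_lt_of_lt_csSup hne hlt
  set Sx : ℝ := ∑ j, r j * xstar j with hSx
  have hSxge : LPval n m r a (fun i => (n : ℝ) * d i) - ε ≤ Sx := by
    have h := hvgt
    rw [← hvval] at h
    simpa [hSx] using h.le
  -- notation
  set pX : Equiv.Perm (Fin n) → ℕ → ℝ :=
    fun σ s => if h : s < n then xstar (σ ⟨s, h⟩) else 0 with hpX
  -- the key lower bound on the total reward over all permutations
  have key : (n.factorial : ℝ) * (Sx - (m : ℝ) * Real.sqrt n * K)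
      ≤ ∑ σ : Equiv.Perm (Fin n), ∑ t ∈ Finset.range n,
          permR n σ r t * xIter m (permR n σ r) (permA m n σ a) d (fun _ => γc) t := by
    set Rf : Equiv.Perm (Fin n) → ℕ → ℝ := fun σ => permR n σ r with hRf
    set Af : Equiv.Perm (Fin n) → ℕ → Fin m → ℝ := fun σ => permA m n σ a with hAf
    set Pf : Equiv.Perm (Fin n) → ℕ → Fin m → ℝ :=
      fun σ => pIter m (Rf σ) (Af σ) d (fun _ => γc) with hPf
    set Xf : Equiv.Perm (Fin n) → ℕ → ℝ :=
      fun σ => xIter m (Rf σ) (Af σ) d (fun _ => γc) with hXf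
    set Hf : Equiv.Perm (Fin n) → ℕ → (Fin m → ℝ) → ℝ :=
      fun σ s p => max (Rf σ s - ∑ i, Af σ s i * p i) 0 + ∑ i, d i * p i with hHf
    have hRb : ∀ (σ : Equiv.Perm (Fin n)) (t : ℕ), t < n → |Rf σ t| ≤ rbar := by
      intro σ t ht
      simp only [hRf, permR, dif_pos ht]
      exact hr _
    have hAb : ∀ (σ : Equiv.Perm (Fin n)) (t : ℕ), t < n → ∀ i, |Af σ t i| ≤ abar := by
      intro σ t ht i
      simp only [hAf, permA, dif_pos ht]
      exact ha _ _
    have hX01 : ∀ (σ : Equiv.Perm (Fin n)) (t : ℕ), 0 ≤ Xf σ t ∧ Xf σ t ≤ 1 := by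
      intro σ t
      simp only [hXf, xIter]
      split_ifs <;> norm_num
    have hdpos : ∀ i, 0 < d i := fun i => lt_of_lt_of_le hdlb (hd i).1
    -- Step 1 : pathwise primal-dual identity plus drift bound
    have F1 : ∀ σ : Equiv.Perm (Fin n),
        (∑ t ∈ Finset.range n, Hf σ t (Pf σ t))
            - (γc / 2) * (n : ℝ) * ((m : ℝ) * (abar + dbar) ^ 2)
          ≤ ∑ t ∈ Finset.range n, Rf σ t * Xf σ t := by
      intro σ
      have hid : ∀ t, Rf σ t * Xf σ t
          = Hf σ t (Pf σ t) + ∑ i, Pf σ t i * (Af σ t i * Xf σ t - d i) :=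
        fun t => reward_id m (Rf σ) (Af σ) d (fun _ => γc) t
      have hdrift' : -(γc / 2) * (n : ℝ) * ((m : ℝ) * (abar + dbar) ^ 2)
          ≤ ∑ t ∈ Finset.range n, ∑ i, Pf σ t i * (Af σ t i * Xf σ t - d i) :=
        drift m n (Rf σ) (Af σ) d γc hγpos ((m : ℝ) * (abar + dbar) ^ 2) ?_
      · have hsum : ∑ t ∈ Finset.range n, Rf σ t * Xf σ t
            = (∑ t ∈ Finset.range n, Hf σ t (Pf σ t))
              + ∑ t ∈ Finset.range n, ∑ i, Pf σ t i * (Af σ t i * Xf σ t - d i) := by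
          rw [← Finset.sum_add_distrib]
          exact Finset.sum_congr rfl (fun t _ => hid t)
        linarith [hdrift', hsum]
      · intro t ht
        have hbnd : ∀ i, (Af σ t i * Xf σ t - d i) ^ 2 ≤ (abar + dbar) ^ 2 := by
          intro i
          have hA := hAb σ t ht i
          have hx := hX01 σ t
          have hdi := hd i
          have habs : |Af σ t i * Xf σ t - d i| ≤ abar + dbar := by
            calc |Af σ t i * Xf σ t - d i| ≤ |Af σ t i * Xf σ t| + |d i| := abs_sub _ _
              _ ≤ abar + dbar := by
                  rw [abs_mul, abs_of_nonneg hx.1, abs_of_nonneg (hdpos i).le]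
                  have := abs_nonneg (Af σ t i)
                  nlinarith
          have h2 := abs_le.mp habs
          nlinarith [h2.1, h2.2]
        calc ∑ i, (Af σ t i * Xf σ t - d i) ^ 2 ≤ ∑ _i : Fin m, (abar + dbar) ^ 2 :=
              Finset.sum_le_sum fun i _ => hbnd i
          _ = (m : ℝ) * (abar + dbar) ^ 2 := by
              rw [Finset.sum_const, Finset.card_univ, Fintype.card_fin, nsmul_eq_mul]
    have hcardPerm : (Finset.univ : Finset (Equiv.Perm (Fin n))).card = n.factorial := by
      rw [Finset.card_univ, Fintype.card_perm, Fintype.card_fin]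
    have F1sum :
        (∑ σ : Equiv.Perm (Fin n), ∑ t ∈ Finset.range n, Hf σ t (Pf σ t))
            - (n.factorial : ℝ) * ((γc / 2) * (n : ℝ) * ((m : ℝ) * (abar + dbar) ^ 2))
          ≤ ∑ σ : Equiv.Perm (Fin n), ∑ t ∈ Finset.range n, Rf σ t * Xf σ t := by
      have h := Finset.sum_le_sum (s := (Finset.univ : Finset (Equiv.Perm (Fin n))))
        (f := fun σ : Equiv.Perm (Fin n) =>
          (∑ t ∈ Finset.range n, Hf σ t (Pf σ t))
            - (γc / 2) * (n : ℝ) * ((m : ℝ) * (abar + dbar) ^ 2))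
        (g := fun σ : Equiv.Perm (Fin n) => ∑ t ∈ Finset.range n, Rf σ t * Xf σ t)
        (fun σ _ => F1 σ)
      rw [Finset.sum_sub_distrib, Finset.sum_const, hcardPerm, nsmul_eq_mul] at h
      exact h
    have hfacts : (n : ℝ) * ((n - 1).factorial : ℝ) = (n.factorial : ℝ) := by
      rw [← Nat.cast_mul, Nat.mul_factorial_pred hn.ne']
    -- Step 2 : per-position expected bound
    have Ft : ∀ t ∈ Finset.range n,
        ((n - 1).factorial : ℝ) * Sx
            - (rbar / dlb) * ((m : ℝ) * ((n.factorial : ℝ) * (2 * abar)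
                / Real.sqrt ((n - t : ℕ) : ℝ)))
          ≤ ∑ σ : Equiv.Perm (Fin n), Hf σ t (Pf σ t) := by
      intro t ht
      have htn : t < n := Finset.mem_range.mp ht
      set k : ℕ := n - t with hk
      have hk1 : 1 ≤ k := by omega
      have hkR : (0 : ℝ) < (k : ℝ) := by exact_mod_cast hk1
      have hcard : (Finset.Ico t n).card = k := by rw [Nat.card_Ico]
      have hsk : 0 < Real.sqrt k := Real.sqrt_pos.mpr hkR
      have hsk2 : Real.sqrt k * Real.sqrt k = (k : ℝ) := Real.mul_self_sqrt hkR.le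
      -- exchangeability: summing over the suffix positions
      have hF2 : (k : ℝ) * (∑ σ : Equiv.Perm (Fin n), Hf σ t (Pf σ t))
          = ∑ σ : Equiv.Perm (Fin n), ∑ t' ∈ Finset.Ico t n, Hf σ t' (Pf σ t) := by
        rw [Finset.sum_comm]
        have hper : ∀ t' ∈ Finset.Ico t n,
            (∑ σ : Equiv.Perm (Fin n), Hf σ t' (Pf σ t))
              = ∑ σ : Equiv.Perm (Fin n), Hf σ t (Pf σ t) := by
          intro t' ht'
          obtain ⟨htt', ht'n⟩ := Finset.mem_Ico.mp ht'
          set π : Equiv.Perm (Fin n) := Equiv.swap ⟨t, htn⟩ ⟨t', ht'n⟩ with hπ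
          have hswap := sum_perm_mulRight π (fun σ => Hf σ t' (Pf σ t))
          rw [← hswap]
          refine Finset.sum_congr rfl fun σ _ => ?_
          have hdata : ∀ s, s < t → Rf (σ * π) s = Rf σ s ∧ Af (σ * π) s = Af σ s := by
            intro s hs
            have hsn : s < n := lt_trans hs htn
            have hπs : π ⟨s, hsn⟩ = ⟨s, hsn⟩ := by
              rw [hπ]
              apply Equiv.swap_apply_of_ne_of_ne <;> (simp only [ne_eq, Fin.mk.injEq]; omega)
            constructor
            · simp only [hRf, permR, dif_pos hsn, Equiv.Perm.mul_apply, hπs]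
            · simp only [hAf, permA, dif_pos hsn, Equiv.Perm.mul_apply, hπs]
          have hP : Pf (σ * π) t = Pf σ t := by
            simp only [hPf]
            exact pIter_congr m (Rf (σ * π)) (Rf σ) (Af (σ * π)) (Af σ) d (fun _ => γc) t hdata
          have hπt' : π ⟨t', ht'n⟩ = ⟨t, htn⟩ := by rw [hπ]; exact Equiv.swap_apply_right _ _
          have hRt : Rf (σ * π) t' = Rf σ t := by
            simp only [hRf, permR, dif_pos ht'n, dif_pos htn, Equiv.Perm.mul_apply, hπt']
          have hAt : Af (σ * π) t' = Af σ t := by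
            simp only [hAf, permA, dif_pos ht'n, dif_pos htn, Equiv.Perm.mul_apply, hπt']
          simp only [hHf, hP, hRt, hAt]
        rw [Finset.sum_congr rfl hper, Finset.sum_const, hcard, nsmul_eq_mul]
      -- pathwise weak duality
      have hF3 : ∀ σ : Equiv.Perm (Fin n),
          (∑ t' ∈ Finset.Ico t n, Rf σ t' * pX σ t')
              - (rbar / dlb) * ∑ i, max ((∑ t' ∈ Finset.Ico t n, Af σ t' i * pX σ t')
                  - (k : ℝ) * d i) 0
            ≤ ∑ t' ∈ Finset.Ico t n, Hf σ t' (Pf σ t) := by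
        intro σ
        have hyb : ∀ s, 0 ≤ pX σ s ∧ pX σ s ≤ 1 := by
          intro s
          simp only [hpX]
          split_ifs with h
          · exact hx01 _
          · exact ⟨le_refl 0, zero_le_one⟩
        have hrr : ∀ j ∈ Finset.Ico t n, |Rf σ j| ≤ rbar :=
          fun j hj => hRb σ j (Finset.mem_Ico.mp hj).2
        have hpnn : ∀ i, 0 ≤ Pf σ t i := fun i => pIter_nonneg m _ _ _ _ t i
        exact dual_lb m (Finset.Ico t n) k hcard hk1 (Rf σ) (Af σ) (pX σ) (Pf σ t) d
          rbar dlb hrbar hdlb hrr hyb hpnn (fun i => (hd i).1)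
      -- expectation of the near-optimal reward over the suffix
      have hF4 : ∑ σ : Equiv.Perm (Fin n), ∑ t' ∈ Finset.Ico t n, Rf σ t' * pX σ t'
          = (k : ℝ) * (((n - 1).factorial : ℝ) * Sx) := by
        rw [Finset.sum_comm]
        have hper : ∀ t' ∈ Finset.Ico t n,
            (∑ σ : Equiv.Perm (Fin n), Rf σ t' * pX σ t')
              = ((n - 1).factorial : ℝ) * Sx := by
          intro t' ht'
          obtain ⟨_, ht'n⟩ := Finset.mem_Ico.mp ht'
          have hre : ∀ σ : Equiv.Perm (Fin n),
              Rf σ t' * pX σ t' = (fun j => r j * xstar j) (σ ⟨t', ht'n⟩) := by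
            intro σ
            simp only [hRf, hpX, permR, dif_pos ht'n]
          rw [Finset.sum_congr rfl (fun σ _ => hre σ),
            sum_perm_apply (⟨t', ht'n⟩ : Fin n) (fun j => r j * xstar j), hSx]
        rw [Finset.sum_congr rfl hper, Finset.sum_const, hcard, nsmul_eq_mul]
      -- variance bound for each resource
      have hF5 : ∀ i : Fin m,
          (∑ σ : Equiv.Perm (Fin n),
              max ((∑ t' ∈ Finset.Ico t n, Af σ t' i * pX σ t') - (k : ℝ) * d i) 0)
            ≤ (n.factorial : ℝ) * (2 * abar) * Real.sqrt k := by
        intro i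
        set c : Fin n → ℝ := fun j => a j i * xstar j with hc
        set Ai : ℝ := ∑ j, c j with hAi
        have hAd : Ai ≤ (n : ℝ) * d i := hxfeas i
        set cb : Fin n → ℝ := fun j => c j - Ai / n with hcb
        have hc1 : ∀ j, |c j| ≤ abar := by
          intro j
          simp only [hc]
          rw [abs_mul]
          calc |a j i| * |xstar j| ≤ abar * 1 := by
                apply mul_le_mul (ha j i) _ (abs_nonneg _) habar
                rw [abs_of_nonneg (hx01 j).1]
                exact (hx01 j).2
            _ = abar := mul_one _
        have hc2 : |Ai| ≤ (n : ℝ) * abar := by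
          rw [hAi]
          calc |∑ j, c j| ≤ ∑ j, |c j| := Finset.abs_sum_le_sum_abs _ _
            _ ≤ ∑ _j : Fin n, abar := Finset.sum_le_sum fun j _ => hc1 j
            _ = (n : ℝ) * abar := by
                rw [Finset.sum_const, Finset.card_univ, Fintype.card_fin, nsmul_eq_mul]
        have hc3 : |Ai / n| ≤ abar := by
          rw [abs_div, abs_of_nonneg hnR.le, div_le_iff₀ hnR]
          linarith [hc2]
        have hcbb : ∀ j, |cb j| ≤ 2 * abar := by
          intro j
          simp only [hcb]
          calc |c j - Ai / n| ≤ |c j| + |Ai / n| := abs_sub _ _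
            _ ≤ 2 * abar := by linarith [hc1 j, hc3]
        have hcb0 : ∑ l, cb l = 0 := by
          simp only [hcb]
          rw [Finset.sum_sub_distrib, Finset.sum_const, Finset.card_univ, Fintype.card_fin,
            nsmul_eq_mul, ← hAi]
          field_simp
          ring
        set Y : Equiv.Perm (Fin n) → ℝ :=
          fun σ => ∑ t' ∈ Finset.Ico t n, (Af σ t' i * pX σ t' - Ai / n) with hY
        have hpt : ∀ σ : Equiv.Perm (Fin n),
            max ((∑ t' ∈ Finset.Ico t n, Af σ t' i * pX σ t') - (k : ℝ) * d i) 0 ≤ |Y σ| := by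
          intro σ
          have hYe : Y σ = (∑ t' ∈ Finset.Ico t n, Af σ t' i * pX σ t')
              - (k : ℝ) * (Ai / n) := by
            simp only [hY]
            rw [Finset.sum_sub_distrib, Finset.sum_const, hcard, nsmul_eq_mul]
          have hkAd : (k : ℝ) * (Ai / n) ≤ (k : ℝ) * d i := by
            apply mul_le_mul_of_nonneg_left _ hkR.le
            rw [div_le_iff₀ hnR]
            linarith [hAd]
          apply max_le _ (abs_nonneg _)
          calc (∑ t' ∈ Finset.Ico t n, Af σ t' i * pX σ t') - (k : ℝ) * d i
              ≤ (∑ t' ∈ Finset.Ico t n, Af σ t' i * pX σ t') - (k : ℝ) * (Ai / n) := by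
                linarith
            _ = Y σ := hYe.symm
            _ ≤ |Y σ| := le_abs_self _
        have hY2 : ∑ σ : Equiv.Perm (Fin n), (Y σ) ^ 2
            ≤ (k : ℝ) * ((n.factorial : ℝ) * (2 * abar) ^ 2) := by
          have hexp : ∀ σ : Equiv.Perm (Fin n),
              (Y σ) ^ 2 = ∑ q ∈ (Finset.Ico t n) ×ˢ (Finset.Ico t n),
                (Af σ q.1 i * pX σ q.1 - Ai / n) * (Af σ q.2 i * pX σ q.2 - Ai / n) := by
            intro σ
            simp only [hY]
            rw [sq, Finset.sum_mul_sum, Finset.sum_product]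
          rw [Finset.sum_congr rfl (fun σ _ => hexp σ), Finset.sum_comm]
          have hq : ∀ q ∈ (Finset.Ico t n) ×ˢ (Finset.Ico t n),
              (∑ σ : Equiv.Perm (Fin n),
                  (Af σ q.1 i * pX σ q.1 - Ai / n) * (Af σ q.2 i * pX σ q.2 - Ai / n))
                ≤ if q.1 = q.2 then (n.factorial : ℝ) * (2 * abar) ^ 2 else 0 := by
            intro q hq'
            obtain ⟨hq1, hq2⟩ := Finset.mem_product.mp hq'
            have h1n : q.1 < n := (Finset.mem_Ico.mp hq1).2
            have h2n : q.2 < n := (Finset.mem_Ico.mp hq2).2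
            have hre : ∀ σ : Equiv.Perm (Fin n),
                (Af σ q.1 i * pX σ q.1 - Ai / n) * (Af σ q.2 i * pX σ q.2 - Ai / n)
                  = cb (σ ⟨q.1, h1n⟩) * cb (σ ⟨q.2, h2n⟩) := by
              intro σ
              simp only [hAf, hpX, permA, dif_pos h1n, dif_pos h2n, hcb, hc]
            rw [Finset.sum_congr rfl (fun σ _ => hre σ)]
            by_cases hqq : q.1 = q.2
            · rw [if_pos hqq]
              have heq : (⟨q.2, h2n⟩ : Fin n) = ⟨q.1, h1n⟩ := by
                simp only [Fin.mk.injEq]; omega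
              rw [heq, sum_perm_apply (⟨q.1, h1n⟩ : Fin n) (fun j => cb j * cb j)]
              have hb : ∑ j, cb j * cb j ≤ (n : ℝ) * (2 * abar) ^ 2 := by
                calc ∑ j, cb j * cb j ≤ ∑ _j : Fin n, (2 * abar) ^ 2 :=
                      Finset.sum_le_sum fun j _ => by
                        have h := hcbb j
                        nlinarith [abs_nonneg (cb j), neg_abs_le (cb j), le_abs_self (cb j)]
                  _ = (n : ℝ) * (2 * abar) ^ 2 := by
                      rw [Finset.sum_const, Finset.card_univ, Fintype.card_fin, nsmul_eq_mul]
              calc ((n - 1).factorial : ℝ) * ∑ j, cb j * cb j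
                  ≤ ((n - 1).factorial : ℝ) * ((n : ℝ) * (2 * abar) ^ 2) :=
                    mul_le_mul_of_nonneg_left hb (Nat.cast_nonneg _)
                _ = (n.factorial : ℝ) * (2 * abar) ^ 2 := by rw [← hfacts]; ring
            · rw [if_neg hqq]
              have hne2 : (⟨q.1, h1n⟩ : Fin n) ≠ ⟨q.2, h2n⟩ := by
                simp only [ne_eq, Fin.mk.injEq]
                exact hqq
              rw [sum_perm_apply_pair _ _ hne2 cb cb, hcb0]
              apply mul_nonpos_of_nonneg_of_nonpos (Nat.cast_nonneg _)
              apply Finset.sum_nonpos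
              intro j _
              nlinarith [sq_nonneg (cb j)]
          calc ∑ q ∈ (Finset.Ico t n) ×ˢ (Finset.Ico t n),
                (∑ σ : Equiv.Perm (Fin n),
                  (Af σ q.1 i * pX σ q.1 - Ai / n) * (Af σ q.2 i * pX σ q.2 - Ai / n))
              ≤ ∑ q ∈ (Finset.Ico t n) ×ˢ (Finset.Ico t n),
                  (if q.1 = q.2 then (n.factorial : ℝ) * (2 * abar) ^ 2 else 0) :=
                Finset.sum_le_sum hq
            _ = (k : ℝ) * ((n.factorial : ℝ) * (2 * abar) ^ 2) := by
                rw [Finset.sum_product]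
                have hinner : ∀ t' ∈ Finset.Ico t n,
                    (∑ t'' ∈ Finset.Ico t n,
                      (if t' = t'' then (n.factorial : ℝ) * (2 * abar) ^ 2 else 0))
                      = (n.factorial : ℝ) * (2 * abar) ^ 2 := by
                  intro t' ht'
                  rw [Finset.sum_ite_eq, if_pos ht']
                rw [Finset.sum_congr rfl hinner, Finset.sum_const, hcard, nsmul_eq_mul]
        have hCS : ∑ σ : Equiv.Perm (Fin n), |Y σ|
            ≤ Real.sqrt ((n.factorial : ℝ) * ∑ σ : Equiv.Perm (Fin n), (Y σ) ^ 2) := by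
          have h := Finset.sum_mul_sq_le_sq_mul_sq Finset.univ
            (fun _ : Equiv.Perm (Fin n) => (1 : ℝ)) (fun σ => |Y σ|)
          simp only [one_mul, one_pow, sq_abs] at h
          rw [Finset.sum_const, hcardPerm, nsmul_eq_mul, mul_one] at h
          have h0 : 0 ≤ ∑ σ : Equiv.Perm (Fin n), |Y σ| :=
            Finset.sum_nonneg fun σ _ => abs_nonneg _
          calc ∑ σ : Equiv.Perm (Fin n), |Y σ|
              = Real.sqrt ((∑ σ : Equiv.Perm (Fin n), |Y σ|) ^ 2) := (Real.sqrt_sq h0).symm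
            _ ≤ _ := Real.sqrt_le_sqrt h
        have hsq2 : Real.sqrt ((n.factorial : ℝ) * ∑ σ : Equiv.Perm (Fin n), (Y σ) ^ 2)
            ≤ (n.factorial : ℝ) * (2 * abar) * Real.sqrt k := by
          have hbig : (n.factorial : ℝ) * ∑ σ : Equiv.Perm (Fin n), (Y σ) ^ 2
              ≤ ((n.factorial : ℝ) * (2 * abar) * Real.sqrt k) ^ 2 := by
            have he : ((n.factorial : ℝ) * (2 * abar) * Real.sqrt k) ^ 2
                = (n.factorial : ℝ) * ((k : ℝ) * ((n.factorial : ℝ) * (2 * abar) ^ 2)) := by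
              rw [mul_pow, mul_pow, Real.sq_sqrt (Nat.cast_nonneg k)]
              ring
            rw [he]
            exact mul_le_mul_of_nonneg_left hY2 (Nat.cast_nonneg _)
          calc Real.sqrt ((n.factorial : ℝ) * ∑ σ : Equiv.Perm (Fin n), (Y σ) ^ 2)
              ≤ Real.sqrt (((n.factorial : ℝ) * (2 * abar) * Real.sqrt k) ^ 2) :=
                Real.sqrt_le_sqrt hbig
            _ = (n.factorial : ℝ) * (2 * abar) * Real.sqrt k := Real.sqrt_sq (by positivity)
        calc (∑ σ : Equiv.Perm (Fin n),
              max ((∑ t' ∈ Finset.Ico t n, Af σ t' i * pX σ t') - (k : ℝ) * d i) 0)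
            ≤ ∑ σ : Equiv.Perm (Fin n), |Y σ| := Finset.sum_le_sum fun σ _ => hpt σ
          _ ≤ _ := le_trans hCS hsq2
      -- combine
      have hmono : (∑ σ : Equiv.Perm (Fin n), ∑ i,
            max ((∑ t' ∈ Finset.Ico t n, Af σ t' i * pX σ t') - (k : ℝ) * d i) 0)
          ≤ (m : ℝ) * ((n.factorial : ℝ) * (2 * abar) * Real.sqrt k) := by
        rw [Finset.sum_comm]
        calc (∑ i, ∑ σ : Equiv.Perm (Fin n),
              max ((∑ t' ∈ Finset.Ico t n, Af σ t' i * pX σ t') - (k : ℝ) * d i) 0)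
            ≤ ∑ _i : Fin m, (n.factorial : ℝ) * (2 * abar) * Real.sqrt k :=
              Finset.sum_le_sum fun i _ => hF5 i
          _ = (m : ℝ) * ((n.factorial : ℝ) * (2 * abar) * Real.sqrt k) := by
              rw [Finset.sum_const, Finset.card_univ, Fintype.card_fin, nsmul_eq_mul]
      have hstep3sum : (k : ℝ) * (((n - 1).factorial : ℝ) * Sx)
            - (rbar / dlb) * ((m : ℝ) * ((n.factorial : ℝ) * (2 * abar) * Real.sqrt k))
          ≤ ∑ σ : Equiv.Perm (Fin n), ∑ t' ∈ Finset.Ico t n, Hf σ t' (Pf σ t) := by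
        have h := Finset.sum_le_sum (s := (Finset.univ : Finset (Equiv.Perm (Fin n))))
          (f := fun σ : Equiv.Perm (Fin n) =>
            (∑ t' ∈ Finset.Ico t n, Rf σ t' * pX σ t')
              - (rbar / dlb) * ∑ i, max ((∑ t' ∈ Finset.Ico t n, Af σ t' i * pX σ t')
                  - (k : ℝ) * d i) 0)
          (g := fun σ : Equiv.Perm (Fin n) => ∑ t' ∈ Finset.Ico t n, Hf σ t' (Pf σ t))
          (fun σ _ => hF3 σ)
        rw [Finset.sum_sub_distrib, ← Finset.mul_sum, hF4] at h
        have h2 := mul_le_mul_of_nonneg_left hmono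
          (show (0 : ℝ) ≤ rbar / dlb by positivity)
        linarith [h, h2]
      -- divide through by k
      have hxk : ∀ x : ℝ, (k : ℝ) * (x / Real.sqrt k) = x * Real.sqrt k := by
        intro x
        rw [mul_div_assoc', div_eq_iff hsk.ne']
        linear_combination (-x) * (Real.sq_sqrt hkR.le)
      rw [← mul_le_mul_iff_right₀ hkR, hF2]
      have hexp2 : (k : ℝ) * (((n - 1).factorial : ℝ) * Sx
            - (rbar / dlb) * ((m : ℝ) * ((n.factorial : ℝ) * (2 * abar) / Real.sqrt k)))
          = (k : ℝ) * (((n - 1).factorial : ℝ) * Sx)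
            - (rbar / dlb) * ((m : ℝ) * ((n.factorial : ℝ) * (2 * abar) * Real.sqrt k)) := by
        have h2 : (k : ℝ) * ((rbar / dlb) * ((m : ℝ)
              * ((n.factorial : ℝ) * (2 * abar) / Real.sqrt k)))
            = (rbar / dlb) * ((m : ℝ) * ((n.factorial : ℝ) * (2 * abar) * Real.sqrt k)) := by
          rw [show (k : ℝ) * ((rbar / dlb) * ((m : ℝ)
              * ((n.factorial : ℝ) * (2 * abar) / Real.sqrt k)))
            = (rbar / dlb) * ((m : ℝ)
              * ((k : ℝ) * ((n.factorial : ℝ) * (2 * abar) / Real.sqrt k))) from by ring,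
            hxk ((n.factorial : ℝ) * (2 * abar))]
        rw [mul_sub, h2]
      rw [hexp2]
      exact hstep3sum
    -- Step 3 : sum the per-position bounds
    have Fsum :
        (n.factorial : ℝ) * Sx
            - (rbar / dlb) * ((m : ℝ) * ((n.factorial : ℝ) * (2 * abar) * (2 * Real.sqrt n)))
          ≤ ∑ σ : Equiv.Perm (Fin n), ∑ t ∈ Finset.range n, Hf σ t (Pf σ t) := by
      have hrefl : ∑ t ∈ Finset.range n, 1 / Real.sqrt ((n - t : ℕ) : ℝ)
          ≤ 2 * Real.sqrt n := by
        have hre := Finset.sum_range_reflect (fun j : ℕ => 1 / Real.sqrt ((j : ℝ) + 1)) n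
        have hcongr : ∑ t ∈ Finset.range n, 1 / Real.sqrt ((n - t : ℕ) : ℝ)
            = ∑ j ∈ Finset.range n, 1 / Real.sqrt (((n - 1 - j : ℕ) : ℝ) + 1) := by
          refine Finset.sum_congr rfl fun t ht => ?_
          have h1 : (n - t : ℕ) = (n - 1 - t) + 1 := by
            have := Finset.mem_range.mp ht; omega
          rw [h1]
          push_cast
          ring_nf
        rw [hcongr, hre]
        exact sum_inv_sqrt n
      have h := Finset.sum_le_sum (s := Finset.range n)
        (f := fun t => ((n - 1).factorial : ℝ) * Sx
          - (rbar / dlb) * ((m : ℝ) * ((n.factorial : ℝ) * (2 * abar)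
              / Real.sqrt ((n - t : ℕ) : ℝ))))
        (g := fun t => ∑ σ : Equiv.Perm (Fin n), Hf σ t (Pf σ t)) Ft
      rw [Finset.sum_comm] at h
      have hLHS : ∑ t ∈ Finset.range n, (((n - 1).factorial : ℝ) * Sx
            - (rbar / dlb) * ((m : ℝ) * ((n.factorial : ℝ) * (2 * abar)
                / Real.sqrt ((n - t : ℕ) : ℝ))))
          = (n : ℝ) * (((n - 1).factorial : ℝ) * Sx)
            - (rbar / dlb) * ((m : ℝ) * ((n.factorial : ℝ) * (2 * abar)))
              * ∑ t ∈ Finset.range n, 1 / Real.sqrt ((n - t : ℕ) : ℝ) := by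
        rw [Finset.sum_sub_distrib, Finset.sum_const, Finset.card_range, nsmul_eq_mul]
        congr 1
        rw [Finset.mul_sum]
        exact Finset.sum_congr rfl fun t _ => by ring
      rw [hLHS] at h
      have hcoef : (0 : ℝ) ≤ (rbar / dlb) * ((m : ℝ) * ((n.factorial : ℝ) * (2 * abar))) := by
        positivity
      have h3 := mul_le_mul_of_nonneg_left hrefl hcoef
      have h4 : (n : ℝ) * (((n - 1).factorial : ℝ) * Sx) = (n.factorial : ℝ) * Sx := by
        rw [← mul_assoc, hfacts]
      have h5 : (rbar / dlb) * ((m : ℝ) * ((n.factorial : ℝ) * (2 * abar)))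
            * (2 * Real.sqrt n)
          = (rbar / dlb) * ((m : ℝ) * ((n.factorial : ℝ) * (2 * abar) * (2 * Real.sqrt n))) := by
        ring
      linarith [h, h3]
    -- Final assembly
    have hγhalf : (γc / 2) * (n : ℝ) = Real.sqrt n / 2 := by
      rw [div_mul_eq_mul_div, hγn]
    have hfinal :
        (n.factorial : ℝ) * (Sx - (m : ℝ) * Real.sqrt n * K)
          ≤ ∑ σ : Equiv.Perm (Fin n), ∑ t ∈ Finset.range n, Rf σ t * Xf σ t := by
      have e1 : (n.factorial : ℝ) * ((γc / 2) * (n : ℝ) * ((m : ℝ) * (abar + dbar) ^ 2))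
          = (n.factorial : ℝ) * ((m : ℝ) * Real.sqrt n * ((abar + dbar) ^ 2 / 2)) := by
        rw [hγhalf]; ring
      have e2 : (rbar / dlb) * ((m : ℝ) * ((n.factorial : ℝ) * (2 * abar) * (2 * Real.sqrt n)))
          = (n.factorial : ℝ) * ((m : ℝ) * Real.sqrt n * (4 * rbar * abar / dlb)) := by
        ring
      have e3 : (n.factorial : ℝ) * (Sx - (m : ℝ) * Real.sqrt n * K)
          = (n.factorial : ℝ) * Sx
            - (n.factorial : ℝ) * ((m : ℝ) * Real.sqrt n * (4 * rbar * abar / dlb))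
            - (n.factorial : ℝ) * ((m : ℝ) * Real.sqrt n * ((abar + dbar) ^ 2 / 2)) := by
        rw [hKdef]; ring
      rw [e3]
      calc (n.factorial : ℝ) * Sx
            - (n.factorial : ℝ) * ((m : ℝ) * Real.sqrt n * (4 * rbar * abar / dlb))
            - (n.factorial : ℝ) * ((m : ℝ) * Real.sqrt n * ((abar + dbar) ^ 2 / 2))
          ≤ (∑ σ : Equiv.Perm (Fin n), ∑ t ∈ Finset.range n, Hf σ t (Pf σ t))
            - (n.factorial : ℝ) * ((γc / 2) * (n : ℝ) * ((m : ℝ) * (abar + dbar) ^ 2)) := by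
            rw [e1]
            have := Fsum
            rw [e2] at this
            linarith
        _ ≤ _ := F1sum
    exact hfinal
  -- conclude
  have hdiv : Sx - (m : ℝ) * Real.sqrt n * K
      ≤ (∑ σ : Equiv.Perm (Fin n), ∑ t ∈ Finset.range n,
          permR n σ r t * xIter m (permR n σ r) (permA m n σ a) d (fun _ => γc) t)
        / (n.factorial : ℝ) := by
    rw [le_div_iff₀ hfactR]
    linarith [key]
  have hbound : (m : ℝ) * Real.sqrt n * K ≤ C * ((m : ℝ) + Real.log n) * Real.sqrt n := by
    have hm0 : (0 : ℝ) ≤ (m : ℝ) := Nat.cast_nonneg m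
    have hC1 : (1 : ℝ) ≤ C := by
      rw [hCdef]
      have : 0 ≤ 4 * |rbar| * |abar| / dlb := by positivity
      nlinarith [sq_nonneg (|abar| + |dbar|)]
    have hC0 : (0 : ℝ) ≤ C := by linarith
    have h1 : (m : ℝ) * Real.sqrt n * K ≤ (m : ℝ) * Real.sqrt n * C := by
      apply mul_le_mul_of_nonneg_left _ (by positivity)
      linarith [hKC]
    calc (m : ℝ) * Real.sqrt n * K ≤ (m : ℝ) * Real.sqrt n * C := h1
      _ ≤ ((m : ℝ) + Real.log n) * Real.sqrt n * C := by
          apply mul_le_mul_of_nonneg_right _ hC0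
          apply mul_le_mul_of_nonneg_right _ (Real.sqrt_nonneg _)
          linarith
      _ = C * ((m : ℝ) + Real.log n) * Real.sqrt n := by ring
  have e1 : LPval n m r a (fun i => (n : ℝ) * d i) ≤ Sx + ε := by linarith [hSxge]
  have e2 : Sx ≤ (∑ σ : Equiv.Perm (Fin n), ∑ t ∈ Finset.range n,
            permR n σ r t * xIter m (permR n σ r) (permA m n σ a) d (fun _ => γc) t)
          / (n.factorial : ℝ) + (m : ℝ) * Real.sqrt n * K := by linarith [hdiv]
  have e3 : LPval n m r a (fun i => (n : ℝ) * d i)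
      ≤ C * ((m : ℝ) + Real.log n) * Real.sqrt n
        + ((∑ σ : Equiv.Perm (Fin n), ∑ t ∈ Finset.range n,
            permR n σ r t * xIter m (permR n σ r) (permA m n σ a) d (fun _ => γc) t)
          / (n.factorial : ℝ) + ε) := by linarith [e1, e2, hbound]
  exact e3
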